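/- Consider a φ-smooth polynomial congestion game of maximum degree d with n players, m resources, and d̃ ≥ 2 total nonzero coefficients, where the nonzero coefficients {a_{r,j}}_{r ∈ R, j ∈ J_r} are independent φ-smooth random variables. Fix ε > 0, and let T be the supremum, over all starting profiles and all sequences of consecutive (1+ε)-improving moves, of the length of the sequence. Then E[T] ≤ φ·(1 + 1/ε)·d̃²·n^{d+1}·(m·ln(n+1) + ln d̃) + 1. -/

import Mathlib

open MeasureTheory ProbabilityTheory

/-- The load of resource `r` under strategy profile `s`: the number of players using `r`. -/
def load {n m : ℕ} (s : Fin n → Finset (Fin m)) (r : Fin m) : ℕ :=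
  (Finset.univ.filter fun i => r ∈ s i).card

/-- The cost of player `i` under profile `s`, with resource costs `cost r ℓ`. -/
def playerCost {n m : ℕ} (cost : Fin m → ℕ → ℝ) (s : Fin n → Finset (Fin m)) (i : Fin n) : ℝ :=
  ∑ r ∈ s i, cost r (load s r)

/-- Rosenthal's potential `Φ(s) = Σ_{r ∈ R} Σ_{j=1}^{ℓ_r(s)} c_r(j)`. -/
def potential {n m : ℕ} (cost : Fin m → ℕ → ℝ) (s : Fin n → Finset (Fin m)) : ℝ :=
  ∑ r : Fin m, ∑ j ∈ Finset.Icc 1 (load s r), cost r j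

/-- A strategy profile is valid when each player plays a strategy from their strategy set. -/
def ValidProfile {n m : ℕ} (strat : Fin n → Set (Finset (Fin m)))
    (s : Fin n → Finset (Fin m)) : Prop :=
  ∀ i, s i ∈ strat i

/-- An `(1+ε)`-improving move from `s` to `s'`: some player `i` deviates to a strategy
`si' ∈ S_i` with `(1+ε)·C_i(s') < C_i(s)`. -/
def ImprovingMove {n m : ℕ} (strat : Fin n → Set (Finset (Fin m))) (cost : Fin m → ℕ → ℝ)
    (ε : ℝ) (s s' : Fin n → Finset (Fin m)) : Prop :=
  ∃ i : Fin n, ∃ si' ∈ strat i, s' = Function.update s i si' ∧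
    (1 + ε) * playerCost cost s' i < playerCost cost s i

/-- The polynomial resource cost: resource `r` has nonzero coefficients `a r j` for
`j ∈ J r`, and `c_r(ℓ) = Σ_{j ∈ J_r} a_{r,j}·ℓ^j`. -/
def polyCost {m : ℕ} (J : Fin m → Finset ℕ) (a : Fin m → ℕ → ℝ) : Fin m → ℕ → ℝ :=
  fun r ℓ => ∑ j ∈ J r, a r j * (ℓ : ℝ) ^ j

/-- A `φ`-smooth random variable: a real-valued random variable taking values in `[0,1]`,
absolutely continuous with density bounded above by `φ`. -/
def PhiSmooth {Ω : Type*} [MeasurableSpace Ω] (P : Measure Ω) (φ : ℝ) (X : Ω → ℝ) : Prop :=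
  Measurable X ∧ ∃ f : ℝ → ENNReal,
    Measure.map X P = volume.withDensity f ∧
    (∀ x, f x ≤ ENNReal.ofReal φ) ∧ ∀ x, x ∉ Set.Icc (0 : ℝ) 1 → f x = 0

/-- The supremum, over all starting profiles and all sequences of consecutive
`(1+ε)`-improving moves, of the length of the sequence. -/
noncomputable def maxImprovingSeqLen {n m : ℕ} (strat : Fin n → Set (Finset (Fin m)))
    (cost : Fin m → ℕ → ℝ) (ε : ℝ) : ℕ :=
  sSup {T : ℕ | ∃ s : ℕ → Fin n → Finset (Fin m),
    (∀ k ≤ T, ValidProfile strat (s k)) ∧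
    ∀ k < T, ImprovingMove strat cost ε (s k) (s (k + 1))}

/-- Coefficient family built from the random values `c`, indexed by the nonzero indices. -/
noncomputable def coeffOf {m : ℕ} (J : Fin m → Finset ℕ)
    (c : ((r : Fin m) × {j : ℕ // j ∈ J r}) → ℝ) : Fin m → ℕ → ℝ :=
  fun r j => if h : j ∈ J r then c ⟨r, ⟨j, h⟩⟩ else 0


section BRDAux

lemma load_split {n m : ℕ} (s : Fin n → Finset (Fin m)) (i : Fin n) (r : Fin m) :
    load s r = (if r ∈ s i then 1 else 0)
      + ((Finset.univ.erase i).filter fun i' => r ∈ s i').card := by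
  classical
  rw [load, Finset.card_filter, Finset.card_filter]
  exact (Finset.add_sum_erase _ _ (Finset.mem_univ i)).symm

lemma potential_update {n m : ℕ} (cost : Fin m → ℕ → ℝ) (s : Fin n → Finset (Fin m))
    (i : Fin n) (si' : Finset (Fin m)) :
    potential cost (Function.update s i si') - potential cost s
      = playerCost cost (Function.update s i si') i - playerCost cost s i := by
  classical
  set s' := Function.update s i si' with hs'
  have hsi : s' i = si' := Function.update_self i si' s
  have haway : ∀ r : Fin m, ((Finset.univ.erase i).filter fun i' => r ∈ s' i').card
      = ((Finset.univ.erase i).filter fun i' => r ∈ s i').card := by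
    intro r
    refine congrArg Finset.card (Finset.filter_congr ?_)
    intro i' hi'
    have hne : i' ≠ i := Finset.ne_of_mem_erase hi'
    simp [hs', Function.update_of_ne hne]
  have hload' : ∀ r, load s' r = (if r ∈ si' then 1 else 0)
      + ((Finset.univ.erase i).filter fun i' => r ∈ s i').card := by
    intro r
    have := load_split s' i r
    rw [haway] at this
    simpa [hsi] using this
  have hpc' : playerCost cost s' i = ∑ r : Fin m, (if r ∈ si' then cost r (load s' r) else 0) := by
    rw [playerCost, hsi, ← Finset.sum_filter, Finset.filter_univ_mem]
  have hpc : playerCost cost s i = ∑ r : Fin m, (if r ∈ s i then cost r (load s r) else 0) := by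
    rw [playerCost, ← Finset.sum_filter, Finset.filter_univ_mem]
  rw [potential, potential, hpc', hpc, ← Finset.sum_sub_distrib, ← Finset.sum_sub_distrib]
  refine Finset.sum_congr rfl ?_
  intro r _
  have key : ∀ L : ℕ, (∑ j ∈ Finset.Icc 1 (L+1), cost r j)
      = (∑ j ∈ Finset.Icc 1 L, cost r j) + cost r (L+1) :=
    fun L => Finset.sum_Icc_succ_top (Nat.succ_le_succ (Nat.zero_le L)) _
  rw [hload' r, load_split s i r]
  set L := ((Finset.univ.erase i).filter fun i' => r ∈ s i').card with hL
  by_cases h1 : r ∈ si' <;> by_cases h2 : r ∈ s i <;>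
    simp only [h1, h2, if_true, if_false, Nat.zero_add, Nat.add_comm 1 L]
  · simp
  · rw [key L]; ring
  · rw [key L]; ring
  · simp

section CostBounds
variable {n m d : ℕ} {J : Fin m → Finset ℕ} {a : Fin m → ℕ → ℝ} {x : ℝ}

lemma polyCost_nonneg (ha0 : ∀ r j, 0 ≤ a r j) (r : Fin m) (ℓ : ℕ) :
    0 ≤ polyCost J a r ℓ :=
  Finset.sum_nonneg fun j _ => mul_nonneg (ha0 r j) (by positivity)

lemma polyCost_ge (hJne : ∀ r, (J r).Nonempty) (ha0 : ∀ r j, 0 ≤ a r j)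
    (hax : ∀ r, ∀ j ∈ J r, x ≤ a r j) (hx0 : 0 ≤ x) (r : Fin m) (ℓ : ℕ) (hℓ : 1 ≤ ℓ) :
    x ≤ polyCost J a r ℓ := by
  obtain ⟨j₀, hj₀⟩ := hJne r
  have h1 : (1 : ℝ) ≤ (ℓ : ℝ) ^ j₀ :=
    one_le_pow₀ (by exact_mod_cast hℓ)
  have : x ≤ a r j₀ * (ℓ : ℝ) ^ j₀ := by
    calc x = x * 1 := by ring
    _ ≤ a r j₀ * (ℓ : ℝ) ^ j₀ :=
      mul_le_mul (hax r j₀ hj₀) h1 one_pos.le ((hx0.trans (hax r j₀ hj₀)))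
  exact this.trans (Finset.single_le_sum
    (fun j _ => mul_nonneg (ha0 r j) (by positivity)) hj₀)

lemma polyCost_le (hn : 0 < n) (hJd : ∀ r, ∀ j ∈ J r, j ≤ d) (ha1 : ∀ r j, a r j ≤ 1)
    (ha0 : ∀ r j, 0 ≤ a r j) (r : Fin m) (ℓ : ℕ) (hℓ : ℓ ≤ n) :
    polyCost J a r ℓ ≤ ((J r).card : ℝ) * (n : ℝ) ^ d := by
  have : ∀ j ∈ J r, a r j * (ℓ : ℝ) ^ j ≤ (n : ℝ) ^ d := by
    intro j hj
    have h1 : (ℓ : ℝ) ^ j ≤ (n : ℝ) ^ j :=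
      pow_le_pow_left₀ (by positivity) (by exact_mod_cast hℓ) j
    have h2 : (n : ℝ) ^ j ≤ (n : ℝ) ^ d :=
      pow_le_pow_right₀ (by exact_mod_cast hn) (hJd r j hj)
    calc a r j * (ℓ : ℝ) ^ j ≤ 1 * (n : ℝ) ^ j :=
      mul_le_mul (ha1 r j) h1 (by positivity) one_pos.le
    _ = (n : ℝ) ^ j := one_mul _
    _ ≤ (n : ℝ) ^ d := h2
  calc polyCost J a r ℓ ≤ ∑ _j ∈ J r, (n : ℝ) ^ d := Finset.sum_le_sum this
  _ = ((J r).card : ℝ) * (n : ℝ) ^ d := by rw [Finset.sum_const, nsmul_eq_mul]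

lemma load_le_n (s : Fin n → Finset (Fin m)) (r : Fin m) : load s r ≤ n := by
  have := Finset.card_filter_le (Finset.univ : Finset (Fin n)) (fun i => r ∈ s i)
  simpa [load] using this

lemma potential_nonneg (hc0 : ∀ r ℓ, 0 ≤ polyCost J a r ℓ) (s : Fin n → Finset (Fin m)) :
    0 ≤ potential (polyCost J a) s :=
  Finset.sum_nonneg fun r _ => Finset.sum_nonneg fun j _ => hc0 r j

lemma potential_le (hn : 0 < n) (hJd : ∀ r, ∀ j ∈ J r, j ≤ d) (ha1 : ∀ r j, a r j ≤ 1)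
    (ha0 : ∀ r j, 0 ≤ a r j) (s : Fin n → Finset (Fin m)) :
    potential (polyCost J a) s ≤ ((∑ r : Fin m, (J r).card : ℕ) : ℝ) * (n : ℝ) ^ (d + 1) := by
  have step : ∀ r : Fin m, ∑ j ∈ Finset.Icc 1 (load s r), polyCost J a r j
      ≤ ((J r).card : ℝ) * ((n : ℝ) ^ d * n) := by
    intro r
    have hb : ∀ j ∈ Finset.Icc 1 (load s r), polyCost J a r j ≤ ((J r).card : ℝ) * (n:ℝ)^d := by
      intro j hj
      exact polyCost_le hn hJd ha1 ha0 r j ((Finset.mem_Icc.mp hj).2.trans (load_le_n s r))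
    calc ∑ j ∈ Finset.Icc 1 (load s r), polyCost J a r j
        ≤ ∑ _j ∈ Finset.Icc 1 (load s r), ((J r).card : ℝ) * (n:ℝ)^d := Finset.sum_le_sum hb
    _ = (load s r : ℝ) * (((J r).card : ℝ) * (n:ℝ)^d) := by
        rw [Finset.sum_const, nsmul_eq_mul, Nat.card_Icc]; norm_num
    _ ≤ (n : ℝ) * (((J r).card : ℝ) * (n:ℝ)^d) := by
        apply mul_le_mul_of_nonneg_right (by exact_mod_cast load_le_n s r) (by positivity)
    _ = ((J r).card : ℝ) * ((n : ℝ) ^ d * n) := by ring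
  calc potential (polyCost J a) s ≤ ∑ r : Fin m, ((J r).card : ℝ) * ((n : ℝ)^d * n) :=
        Finset.sum_le_sum fun r _ => step r
  _ = ((∑ r : Fin m, (J r).card : ℕ) : ℝ) * (n : ℝ) ^ (d + 1) := by
      rw [← Finset.sum_mul]; push_cast; ring

lemma mover_cost_ge {cost : Fin m → ℕ → ℝ} (hc0 : ∀ r ℓ, 0 ≤ cost r ℓ)
    (hcx : ∀ r ℓ, 1 ≤ ℓ → x ≤ cost r ℓ)
    (s : Fin n → Finset (Fin m)) (i : Fin n) (si' : Finset (Fin m)) (hne : si'.Nonempty) :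
    x ≤ playerCost cost (Function.update s i si') i := by
  classical
  obtain ⟨r₀, hr₀⟩ := hne
  set s' := Function.update s i si' with hs'
  have hsi : s' i = si' := Function.update_self i si' s
  have hload : 1 ≤ load s' r₀ := by
    rw [load]
    refine Finset.card_pos.mpr ⟨i, ?_⟩
    simp [hsi, hr₀]
  have h1 : x ≤ cost r₀ (load s' r₀) := hcx _ _ hload
  refine h1.trans ?_
  rw [playerCost, hsi]
  exact Finset.single_le_sum (fun r _ => hc0 r _) hr₀

end CostBounds

section Det
variable {n m : ℕ} {strat : Fin n → Set (Finset (Fin m))} {cost : Fin m → ℕ → ℝ} {ε x : ℝ}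

lemma improving_step (hstrat' : ∀ i, ∀ t ∈ strat i, t.Nonempty)
    (hc0 : ∀ r ℓ, 0 ≤ cost r ℓ) (hcx : ∀ r ℓ, 1 ≤ ℓ → x ≤ cost r ℓ)
    (hε : 0 < ε) (hx0 : 0 ≤ x) {s s' : Fin n → Finset (Fin m)}
    (h : ImprovingMove strat cost ε s s') :
    potential cost s' + ε * x ≤ potential cost s := by
  obtain ⟨i, si', hmem, heq, hlt⟩ := h
  subst heq
  have hdiff := potential_update cost s i si'
  have hC : x ≤ playerCost cost (Function.update s i si') i := by
    have hc0' : ∀ r ℓ, 0 ≤ cost r ℓ := hc0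
    exact mover_cost_ge hc0' hcx s i si' (hstrat' i si' hmem)
  have : ε * x ≤ ε * playerCost cost (Function.update s i si') i :=
    mul_le_mul_of_nonneg_left hC hε.le
  nlinarith [hlt]

/-- Main deterministic bound: any `T` in the improving-sequence-length set satisfies
`T + 1 ≤ (n+1)^m` and `T * (ε*x) ≤ A` where `A` bounds the potential. -/
lemma det_bound (hstrat' : ∀ i, ∀ t ∈ strat i, t.Nonempty)
    (hc0 : ∀ r ℓ, 0 ≤ cost r ℓ) (hcx : ∀ r ℓ, 1 ≤ ℓ → x ≤ cost r ℓ)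
    {A : ℝ} (hpot0 : ∀ s : Fin n → Finset (Fin m), 0 ≤ potential cost s)
    (hpotA : ∀ s : Fin n → Finset (Fin m), potential cost s ≤ A)
    (hε : 0 < ε) (hx0 : 0 < x)
    {T : ℕ} {s : ℕ → Fin n → Finset (Fin m)}
    (hmoves : ∀ k < T, ImprovingMove strat cost ε (s k) (s (k + 1))) :
    T + 1 ≤ (n + 1) ^ m ∧ (T : ℝ) * (ε * x) ≤ A := by
  have hstep : ∀ k < T, potential cost (s (k+1)) + ε * x ≤ potential cost (s k) :=
    fun k hk => improving_step hstrat' hc0 hcx hε hx0.le (hmoves k hk)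
  have hchain : ∀ k ≤ T, potential cost (s k) + (k : ℝ) * (ε * x) ≤ potential cost (s 0) := by
    intro k hk
    induction k with
    | zero => simp
    | succ k ih =>
      have h1 := hstep k (by omega)
      have h2 := ih (by omega)
      push_cast
      linarith
  constructor
  · -- injectivity of load vectors
    have hanti : ∀ k₁ k₂, k₁ < k₂ → k₂ ≤ T → potential cost (s k₂) < potential cost (s k₁) := by
      intro k₁ k₂ hlt hle
      induction k₂ with
      | zero => omega
      | succ k ih =>
        have h1 := hstep k (by omega)
        rcases Nat.lt_succ_iff_lt_or_eq.mp hlt with h | h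
        · have := ih h (by omega)
          nlinarith
        · subst h; nlinarith
    have hg : Function.Injective (fun k : Fin (T+1) => fun r : Fin m =>
        (⟨load (s k.1) r, Nat.lt_succ_of_le (load_le_n (s k.1) r)⟩ : Fin (n+1))) := by
      intro k₁ k₂ h
      have hloads : load (s k₁.1) = load (s k₂.1) := by
        funext r
        exact congrArg Fin.val (congrFun h r)
      have hpots : potential cost (s k₁.1) = potential cost (s k₂.1) := by
        rw [potential, potential, hloads]
      by_contra hne
      have hne' : k₁.1 ≠ k₂.1 := fun hv => hne (Fin.ext hv)
      rcases Nat.lt_or_ge k₁.1 k₂.1 with h' | h'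
      · exact absurd hpots (ne_of_gt (hanti _ _ h' (Nat.lt_succ_iff.mp k₂.2)))
      · exact absurd hpots.symm (ne_of_gt (hanti _ _ (lt_of_le_of_ne h' hne'.symm)
          (Nat.lt_succ_iff.mp k₁.2)))
    calc T + 1 = Fintype.card (Fin (T+1)) := by simp
    _ ≤ Fintype.card (Fin m → Fin (n+1)) := Fintype.card_le_of_injective _ hg
    _ = (n + 1) ^ m := by simp [Fintype.card_fun]
  · have h1 := hchain T le_rfl
    have h2 := hpot0 (s T)
    have h3 := hpotA (s 0)
    linarith

end Det

lemma harmonic_tail (K : ℕ) (hK : 1 ≤ K) :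
    ∀ N, K ≤ N → ∑ t ∈ Finset.Icc (K+1) N, (1 / (t:ℝ)) ≤ Real.log N - Real.log K := by
  intro N
  induction N with
  | zero => intro h; omega
  | succ N ih =>
    intro hKN
    rcases Nat.lt_or_ge K (N+1) with h | h
    · -- K ≤ N
      have hKN' : K ≤ N := by omega
      have h1 : ∑ t ∈ Finset.Icc (K+1) (N+1), (1 / (t:ℝ))
          = (∑ t ∈ Finset.Icc (K+1) N, (1 / (t:ℝ))) + 1 / ((N:ℝ)+1) := by
        rw [Finset.sum_Icc_succ_top (by omega : K + 1 ≤ N + 1) (fun t => 1 / (t:ℝ))]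
        push_cast; ring_nf
      have h2 : 1 / ((N:ℝ)+1) ≤ Real.log (N+1) - Real.log N := by
        have hN1 : 1 ≤ N := by omega
        have hNpos : (0:ℝ) < N := by exact_mod_cast hN1
        have key := Real.log_le_sub_one_of_pos
          (show (0:ℝ) < (N:ℝ) / ((N:ℝ)+1) by positivity)
        rw [Real.log_div (by positivity) (by positivity)] at key
        have : (N:ℝ) / ((N:ℝ)+1) - 1 = -(1 / ((N:ℝ)+1)) := by field_simp; ring
        rw [this] at key
        push_cast
        linarith
      have h3 := ih hKN'
      push_cast at h1 h2 ⊢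
      linarith
    · -- K = N+1 : empty sum
      have : K = N + 1 := by omega
      subst this
      simp

lemma B_one_sub_log_le_one {B : ℝ} (hB : 0 < B) : B - B * Real.log B ≤ 1 := by
  have h := Real.log_le_sub_one_of_pos (show (0:ℝ) < B⁻¹ by positivity)
  rw [Real.log_inv] at h
  have hB' : B⁻¹ - 1 = (1 - B)/B := by field_simp
  rw [hB'] at h
  have h2 : B * (-Real.log B) ≤ B * ((1-B)/B) := mul_le_mul_of_nonneg_left h hB.le
  have h3 : B * ((1-B)/B) = 1 - B := by field_simp
  nlinarith

lemma sum_min_le (N : ℕ) (hN : 1 ≤ N) (B LN LD C : ℝ) (hB : 0 < B)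
    (hLN : Real.log N ≤ LN) (hLN0 : 0 ≤ LN) (hLD : Real.log 2 ≤ LD) (hC : 0 ≤ C) :
    ∑ t ∈ Finset.Icc 1 N, min 1 (B / (t:ℝ)) ≤ B * LN + B * LD + C + 1 := by
  have hlog2 : (0.6931471803 : ℝ) < Real.log 2 := Real.log_two_gt_d9
  have hLD0 : 0 ≤ LD := by linarith
  by_cases hB1 : B < 1
  · -- small B
    have hsplit : Finset.Icc 1 N = insert 1 (Finset.Icc 2 N) := by
      ext t; simp only [Finset.mem_insert, Finset.mem_Icc]; omega
    have hbound : ∑ t ∈ Finset.Icc 1 N, min 1 (B / (t:ℝ))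
        ≤ ∑ t ∈ Finset.Icc 1 N, B * (1 / (t:ℝ)) := by
      refine Finset.sum_le_sum fun t ht => ?_
      have : B / (t:ℝ) = B * (1/(t:ℝ)) := by ring
      rw [← this]; exact min_le_right _ _
    have htail : ∑ t ∈ Finset.Icc 2 N, (1 / (t:ℝ)) ≤ Real.log N := by
      have := harmonic_tail 1 le_rfl N hN
      simpa using this
    have hsum : ∑ t ∈ Finset.Icc 1 N, B * (1 / (t:ℝ)) = B * (1 + ∑ t ∈ Finset.Icc 2 N, (1/(t:ℝ))) := by
      rw [hsplit, Finset.sum_insert (by simp), mul_add, Finset.mul_sum]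
      norm_num
    have : ∑ t ∈ Finset.Icc 1 N, B * (1 / (t:ℝ)) ≤ B * (1 + Real.log N) := by
      rw [hsum]
      exact mul_le_mul_of_nonneg_left (by linarith) hB.le
    have hBLN : B * Real.log N ≤ B * LN := mul_le_mul_of_nonneg_left hLN hB.le
    have hBLD : 0 ≤ B * LD := mul_nonneg hB.le hLD0
    nlinarith
  · push_neg at hB1
    set K := ⌊B⌋₊ with hKdef
    have hK1 : 1 ≤ K := Nat.le_floor (by exact_mod_cast hB1)
    have hKB : (K:ℝ) ≤ B := Nat.floor_le (by linarith)
    have hBK2 : B ≤ 2 * K := by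
      have h1 : B - 1 < (K:ℝ) := Nat.sub_one_lt_floor B
      have h2 : (1:ℝ) ≤ (K:ℝ) := by exact_mod_cast hK1
      rcases le_or_gt B 2 with h | h
      · linarith
      · linarith
    by_cases hKN : N ≤ K
    · -- sum ≤ N ≤ B, and either N = 1 or B*(LN+LD) ≥ B
      have hsum : ∑ t ∈ Finset.Icc 1 N, min 1 (B / (t:ℝ)) ≤ N := by
        calc ∑ t ∈ Finset.Icc 1 N, min 1 (B / (t:ℝ)) ≤ ∑ _t ∈ Finset.Icc 1 N, (1:ℝ) :=
          Finset.sum_le_sum fun t _ => min_le_left _ _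
        _ = N := by simp [Nat.card_Icc]
      have hNB : (N:ℝ) ≤ B := le_trans (by exact_mod_cast hKN) hKB
      rcases Nat.lt_or_ge N 2 with h | h
      · have hN1 : N = 1 := by omega
        subst hN1
        have hBLN : (0:ℝ) ≤ B * LN := mul_nonneg hB.le hLN0
        have hBLD : (0:ℝ) ≤ B * LD := mul_nonneg hB.le hLD0
        push_cast at hsum
        linarith
      · have hlogN : Real.log 2 ≤ Real.log N := by
          apply Real.log_le_log (by norm_num)
          exact_mod_cast h
        have hLN2 : Real.log 2 ≤ LN := hlogN.trans hLN
        have h1 : B * 1 ≤ B * (LN + LD) := by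
          apply mul_le_mul_of_nonneg_left _ hB.le
          linarith
        nlinarith
    · push_neg at hKN
      have hKN' : K ≤ N := hKN.le
      have hbound : ∑ t ∈ Finset.Icc 1 N, min 1 (B / (t:ℝ))
          ≤ ∑ t ∈ Finset.Icc 1 N, (if t ≤ K then (1:ℝ) else B / (t:ℝ)) := by
        refine Finset.sum_le_sum fun t ht => ?_
        split_ifs
        · exact min_le_left _ _
        · exact min_le_right _ _
      have hsplit : ∑ t ∈ Finset.Icc 1 N, (if t ≤ K then (1:ℝ) else B / (t:ℝ))
          = (∑ _t ∈ Finset.Icc 1 K, (1:ℝ)) + ∑ t ∈ Finset.Icc (K+1) N, B / (t:ℝ) := by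
        rw [Finset.sum_ite]
        congr 1
        · apply Finset.sum_congr _ (fun _ _ => rfl)
          ext t; simp only [Finset.mem_filter, Finset.mem_Icc]; omega
        · apply Finset.sum_congr _ (fun _ _ => rfl)
          ext t; simp only [Finset.mem_filter, Finset.mem_Icc]; omega
      have h1 : (∑ _t ∈ Finset.Icc 1 K, (1:ℝ)) = K := by
        simp [Nat.card_Icc]
      have h2 : ∑ t ∈ Finset.Icc (K+1) N, B / (t:ℝ) = B * ∑ t ∈ Finset.Icc (K+1) N, (1/(t:ℝ)) := by
        rw [Finset.mul_sum]
        exact Finset.sum_congr rfl fun t _ => by ring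
      have h3 := harmonic_tail K hK1 N hKN'
      have hKpos : (0:ℝ) < K := by exact_mod_cast hK1
      have hlogK : Real.log B - Real.log 2 ≤ Real.log K := by
        have := Real.log_le_log hB hBK2
        rw [Real.log_mul (by norm_num) (by positivity)] at this
        linarith
      have h4 : ∑ t ∈ Finset.Icc (K+1) N, B / (t:ℝ) ≤ B * (Real.log N - Real.log K) := by
        rw [h2]
        exact mul_le_mul_of_nonneg_left h3 hB.le
      have h5 : B * (Real.log N - Real.log K) ≤ B * (LN + Real.log 2 - Real.log B) := by
        apply mul_le_mul_of_nonneg_left _ hB.le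
        linarith
      have h6 : B - B * Real.log B ≤ 1 := B_one_sub_log_le_one hB
      have h7 : B * Real.log 2 ≤ B * LD := mul_le_mul_of_nonneg_left hLD hB.le
      calc ∑ t ∈ Finset.Icc 1 N, min 1 (B / (t:ℝ))
          ≤ (K:ℝ) + ∑ t ∈ Finset.Icc (K+1) N, B / (t:ℝ) := by
            rw [← h1]; rw [hsplit] at hbound; exact hbound
      _ ≤ B + B * (LN + Real.log 2 - Real.log B) := by linarith
      _ ≤ B * LN + B * LD + C + 1 := by nlinarith


lemma min_one_ofReal (w : ℝ) : min 1 (ENNReal.ofReal w) = ENNReal.ofReal (min 1 w) := by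
  rcases le_total (1:ℝ) w with h | h
  · rw [min_eq_left (ENNReal.one_le_ofReal.mpr h), min_eq_left h, ENNReal.ofReal_one]
  · rw [min_eq_right (ENNReal.ofReal_le_one.mpr h), min_eq_right h]

variable {Ω : Type*} [MeasurableSpace Ω] {P : Measure Ω} {φ : ℝ} {X : Ω → ℝ}

lemma phiSmooth_tail (hφ0 : 0 ≤ φ) (h : PhiSmooth P φ X) {y : ℝ} (hy : 0 ≤ y) :
    P {ω | X ω ≤ y} ≤ ENNReal.ofReal (φ * y) := by
  obtain ⟨hmeas, f, hmap, hub, hsupp⟩ := h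
  have heq : P {ω | X ω ≤ y} = (Measure.map X P) (Set.Iic y) := by
    rw [Measure.map_apply hmeas measurableSet_Iic]; rfl
  rw [heq, hmap, withDensity_apply _ measurableSet_Iic]
  have hsub : Set.Iic y ⊆ Set.Iio 0 ∪ Set.Icc 0 y := by
    intro z hz
    rcases lt_or_ge z 0 with h' | h'
    · exact Or.inl h'
    · exact Or.inr ⟨h', hz⟩
  calc ∫⁻ x in Set.Iic y, f x ≤ ∫⁻ x in Set.Iio 0 ∪ Set.Icc 0 y, f x :=
        lintegral_mono_set hsub
  _ ≤ (∫⁻ x in Set.Iio 0, f x) + ∫⁻ x in Set.Icc 0 y, f x := lintegral_union_le _ _ _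
  _ ≤ 0 + ENNReal.ofReal φ * volume (Set.Icc 0 y) := by
      gcongr
      · have : ∫⁻ x in Set.Iio 0, f x = ∫⁻ (_x : ℝ) in Set.Iio 0, (0:ENNReal) := by
          refine setLIntegral_congr_fun measurableSet_Iio (fun x hx => ?_)
          exact hsupp x (fun hmem => absurd hmem.1 (not_le.mpr hx))
        simp [this]
      · calc ∫⁻ x in Set.Icc 0 y, f x ≤ ∫⁻ (_x : ℝ) in Set.Icc 0 y, ENNReal.ofReal φ :=
              lintegral_mono fun x => hub x
        _ = ENNReal.ofReal φ * volume (Set.Icc 0 y) := setLIntegral_const _ _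
  _ = ENNReal.ofReal (φ * y) := by
      rw [Real.volume_Icc, zero_add, ← ENNReal.ofReal_mul hφ0]
      ring_nf

lemma phiSmooth_range (hφ0 : 0 ≤ φ) (h : PhiSmooth P φ X) :
    P {ω | X ω ∉ Set.Ioc (0:ℝ) 1} = 0 := by
  obtain ⟨hmeas, f, hmap, hub, hsupp⟩ := h
  have hSm : MeasurableSet (Set.Ioc (0:ℝ) 1)ᶜ := measurableSet_Ioc.compl
  have heq : P {ω | X ω ∉ Set.Ioc (0:ℝ) 1} = (Measure.map X P) (Set.Ioc (0:ℝ) 1)ᶜ := by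
    rw [Measure.map_apply hmeas hSm]; rfl
  rw [heq, hmap, withDensity_apply _ hSm]
  have hsub : (Set.Ioc (0:ℝ) 1)ᶜ ⊆ (Set.Icc (0:ℝ) 1)ᶜ ∪ {0} := by
    intro z hz
    simp only [Set.mem_compl_iff, Set.mem_Ioc, Set.mem_Icc, Set.mem_union, Set.mem_singleton_iff,
      not_and_or, not_le, not_lt] at *
    rcases hz with h' | h'
    · rcases eq_or_lt_of_le h' with h'' | h''
      · right; linarith
      · left; left; exact h''
    · left; right; exact h'
  have hle : ∫⁻ x in (Set.Ioc (0:ℝ) 1)ᶜ, f x ≤ 0 := by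
    calc ∫⁻ x in (Set.Ioc (0:ℝ) 1)ᶜ, f x
        ≤ ∫⁻ x in (Set.Icc (0:ℝ) 1)ᶜ ∪ {0}, f x := lintegral_mono_set hsub
    _ ≤ (∫⁻ x in (Set.Icc (0:ℝ) 1)ᶜ, f x) + ∫⁻ x in {(0:ℝ)}, f x := lintegral_union_le _ _ _
    _ ≤ 0 + 0 := by
        gcongr
        · have : ∫⁻ x in (Set.Icc (0:ℝ) 1)ᶜ, f x = ∫⁻ (_x : ℝ) in (Set.Icc (0:ℝ) 1)ᶜ, (0:ENNReal) := by
            refine setLIntegral_congr_fun measurableSet_Icc.compl (fun x hx => ?_)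
            exact hsupp x hx
          simp [this]
        · calc ∫⁻ x in {(0:ℝ)}, f x ≤ ∫⁻ (_x : ℝ) in {(0:ℝ)}, ENNReal.ofReal φ :=
                lintegral_mono fun x => hub x
          _ = ENNReal.ofReal φ * volume {(0:ℝ)} := setLIntegral_const _ _
          _ = 0 := by simp
    _ = 0 := by simp
  exact le_antisymm hle zero_le

end BRDAux

set_option maxHeartbeats 2000000 in
/-- in a `φ`-smooth polynomial congestion game of maximum degree `d` with `n`
players, `m` resources and `d̃ = Σ_r |J_r| ≥ 2` total nonzero coefficients (the nonzero
coefficients being independent `φ`-smooth random variables), for any `ε > 0` the expected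
length `E[T]` of the longest sequence of consecutive `(1+ε)`-improving moves satisfies
`E[T] ≤ φ·(1 + 1/ε)·d̃²·n^{d+1}·(m·ln(n+1) + ln d̃) + 1`. -/
theorem smoothed_polynomial_brd_bound
    {Ω : Type*} [MeasurableSpace Ω] (P : Measure Ω) [IsProbabilityMeasure P]
    {n m d : ℕ} (hn : 0 < n)
    (φ : ℝ) (hφ : 1 ≤ φ)
    (strat : Fin n → Set (Finset (Fin m)))
    (hstrat : ∀ i, (strat i).Nonempty)
    (hstrat' : ∀ i, ∀ t ∈ strat i, t.Nonempty)
    (J : Fin m → Finset ℕ)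
    (hJd : ∀ r, ∀ j ∈ J r, j ≤ d)
    (hJne : ∀ r, (J r).Nonempty)
    (hd2 : 2 ≤ ∑ r : Fin m, (J r).card)
    (c : ((r : Fin m) × {j : ℕ // j ∈ J r}) → Ω → ℝ)
    (hsmooth : ∀ p, PhiSmooth P φ (c p))
    (hindep : iIndepFun c P)
    (ε : ℝ) (hε : 0 < ε) :
    ∫⁻ ω, (maxImprovingSeqLen strat (polyCost J (coeffOf J fun p => c p ω)) ε : ENNReal) ∂P
      ≤ ENNReal.ofReal
          (φ * (1 + 1 / ε) * (∑ r : Fin m, (J r).card : ℕ) ^ 2 * (n : ℝ) ^ (d + 1) *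
              (m * Real.log (n + 1) + Real.log (∑ r : Fin m, (J r).card : ℕ)) + 1) := by
  classical
  set D : ℕ := ∑ r : Fin m, (J r).card with hD
  have hm : 0 < m := by
    rcases Nat.eq_zero_or_pos m with h | h
    · exfalso; rw [hD] at hd2; subst h; simp at hd2
    · exact h
  have hφ0 : (0:ℝ) ≤ φ := by linarith
  obtain ⟨j₀, hj₀⟩ := hJne ⟨0, hm⟩
  haveI hne : Nonempty ((r : Fin m) × {j : ℕ // j ∈ J r}) := ⟨⟨⟨0, hm⟩, j₀, hj₀⟩⟩
  have hcard : Fintype.card ((r : Fin m) × {j : ℕ // j ∈ J r}) = D := by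
    rw [Fintype.card_sigma]
    simp [hD, Fintype.card_coe]
  set X : Ω → ℝ := fun ω => Finset.univ.inf' Finset.univ_nonempty (fun p : (r : Fin m) × {j : ℕ // j ∈ J r} => c p ω) with hX
  set N : ℕ := (n+1)^m - 1 with hNdef
  have hMN : 2 ≤ (n+1)^m := by
    calc 2 = 2^1 := by norm_num
    _ ≤ (n+1)^m := Nat.pow_le_pow_left (by omega) 1 |>.trans (Nat.pow_le_pow_right (by omega) hm)
  have hN1 : 1 ≤ N := by omega
  set A : ℝ := (D:ℝ) * (n:ℝ)^(d+1) with hA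
  have h2D : (2:ℝ) ≤ (D:ℝ) := by exact_mod_cast hd2
  have hn' : (1:ℝ) ≤ (n:ℝ) := by exact_mod_cast hn
  have hApos : 0 < A := by rw [hA]; positivity
  set yt : ℕ → ℝ := fun t => A / (ε * t) with hyt
  set B : ℝ := φ * (D:ℝ)^2 * (n:ℝ)^(d+1) / ε with hB
  have hB0 : 0 < B := by rw [hB]; positivity
  -- pointwise deterministic bound
  have hpt : ∀ ω, (∀ p : (r : Fin m) × {j : ℕ // j ∈ J r}, c p ω ∈ Set.Ioc (0:ℝ) 1) →
      maxImprovingSeqLen strat (polyCost J (coeffOf J fun p => c p ω)) ε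
        ≤ ∑ t ∈ Finset.Icc 1 N, if X ω ≤ yt t then 1 else 0 := by
    intro ω hω
    set a : Fin m → ℕ → ℝ := coeffOf J (fun p => c p ω) with ha
    have ha0 : ∀ r j, 0 ≤ a r j := by
      intro r j
      rw [ha, coeffOf]
      split
      · exact (hω _).1.le
      · exact le_rfl
    have ha1 : ∀ r j, a r j ≤ 1 := by
      intro r j
      rw [ha, coeffOf]
      split
      · exact (hω _).2
      · norm_num
    have hax : ∀ r, ∀ j ∈ J r, X ω ≤ a r j := by
      intro r j hj
      rw [ha, coeffOf]
      rw [dif_pos hj]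
      exact Finset.inf'_le (fun p : (r : Fin m) × {j : ℕ // j ∈ J r} => c p ω) (Finset.mem_univ ⟨r, j, hj⟩)
    have hx0 : 0 < X ω := by
      obtain ⟨p, _, hp⟩ := Finset.exists_mem_eq_inf' Finset.univ_nonempty (fun p : (r : Fin m) × {j : ℕ // j ∈ J r} => c p ω)
      rw [hX]
      simp only [hp]
      exact (hω p).1
    have hc0 : ∀ r ℓ, 0 ≤ polyCost J a r ℓ := polyCost_nonneg ha0
    have hcx : ∀ r ℓ, 1 ≤ ℓ → X ω ≤ polyCost J a r ℓ :=
      fun r ℓ h => polyCost_ge hJne ha0 hax hx0.le r ℓ h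
    have hpot0 : ∀ s : Fin n → Finset (Fin m), 0 ≤ potential (polyCost J a) s :=
      potential_nonneg hc0
    have hpotA : ∀ s : Fin n → Finset (Fin m), potential (polyCost J a) s ≤ A := by
      intro s
      have h := potential_le hn hJd ha1 ha0 s
      rw [hA, hD]
      exact h
    rw [maxImprovingSeqLen]
    apply csSup_le
    · exact ⟨0, fun _ => fun i => (hstrat i).some, fun k _ i => (hstrat i).some_mem,
        fun k hk => absurd hk (by omega)⟩
    · intro T hT
      obtain ⟨s, _, hmoves⟩ := hT
      obtain ⟨hTN, hTA⟩ := det_bound hstrat' hc0 hcx hpot0 hpotA hε hx0 hmoves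
      have hTN' : T ≤ N := by omega
      have hind : ∀ t, 1 ≤ t → t ≤ T → X ω ≤ yt t := by
        intro t h1 h2
        have ht : (t:ℝ) ≤ (T:ℝ) := by exact_mod_cast h2
        have h3 : (t:ℝ) * (ε * X ω) ≤ (T:ℝ) * (ε * X ω) :=
          mul_le_mul_of_nonneg_right ht (by positivity)
        have h4 : (t:ℝ) * (ε * X ω) ≤ A := h3.trans hTA
        rw [hyt]
        simp only []
        rw [le_div_iff₀ (by positivity)]
        have htpos : (0:ℝ) < t := by exact_mod_cast h1
        nlinarith
      calc T = ∑ t ∈ Finset.Icc 1 T, 1 := by simp [Nat.card_Icc]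
      _ ≤ ∑ t ∈ Finset.Icc 1 T, if X ω ≤ yt t then 1 else 0 := by
          refine Finset.sum_le_sum fun t ht => ?_
          rw [Finset.mem_Icc] at ht
          rw [if_pos (hind t ht.1 ht.2)]
      _ ≤ ∑ t ∈ Finset.Icc 1 N, if X ω ≤ yt t then 1 else 0 :=
          Finset.sum_le_sum_of_subset (Finset.Icc_subset_Icc_right hTN')
  -- null bad event
  have hGnull : P (⋃ p : (r : Fin m) × {j : ℕ // j ∈ J r}, {ω | c p ω ∉ Set.Ioc (0:ℝ) 1}) = 0 :=
    measure_iUnion_null fun p => phiSmooth_range hφ0 (hsmooth p)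
  have hae : ∀ᵐ ω ∂P,
      ((maxImprovingSeqLen strat (polyCost J (coeffOf J fun p => c p ω)) ε : ℕ) : ENNReal)
        ≤ ((∑ t ∈ Finset.Icc 1 N, if X ω ≤ yt t then 1 else 0 : ℕ) : ENNReal) := by
    rw [ae_iff]
    refine measure_mono_null ?_ hGnull
    intro ω hω
    simp only [Set.mem_setOf_eq, not_le] at hω
    by_contra hmem
    simp only [Set.mem_iUnion, Set.mem_setOf_eq] at hmem
    push_neg at hmem
    exact absurd (Nat.cast_le.mpr (hpt ω hmem)) (not_le.mpr hω)
  have hsetX : ∀ y : ℝ, {ω | X ω ≤ y} = ⋃ p : (r : Fin m) × {j : ℕ // j ∈ J r}, c p ⁻¹' Set.Iic y := by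
    intro y
    ext ω
    simp [hX, Finset.inf'_le_iff]
  have hmeasX : ∀ y : ℝ, MeasurableSet {ω | X ω ≤ y} := by
    intro y
    rw [hsetX]
    exact MeasurableSet.iUnion fun p => (hsmooth p).1 measurableSet_Iic
  have htail : ∀ y : ℝ, 0 ≤ y → P {ω | X ω ≤ y} ≤ (D:ENNReal) * ENNReal.ofReal (φ * y) := by
    intro y hy
    calc P {ω | X ω ≤ y} = P (⋃ p : (r : Fin m) × {j : ℕ // j ∈ J r}, c p ⁻¹' Set.Iic y) := by rw [hsetX]
    _ ≤ ∑' p : (r : Fin m) × {j : ℕ // j ∈ J r}, P (c p ⁻¹' Set.Iic y) := measure_iUnion_le _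
    _ = ∑ p : (r : Fin m) × {j : ℕ // j ∈ J r}, P (c p ⁻¹' Set.Iic y) := tsum_fintype _
    _ ≤ ∑ _p : (r : Fin m) × {j : ℕ // j ∈ J r}, ENNReal.ofReal (φ * y) :=
        Finset.sum_le_sum fun p _ => phiSmooth_tail hφ0 (hsmooth p) hy
    _ = (D:ENNReal) * ENNReal.ofReal (φ * y) := by
        rw [Finset.sum_const, Finset.card_univ, hcard, nsmul_eq_mul]
  calc ∫⁻ ω, ((maxImprovingSeqLen strat (polyCost J (coeffOf J fun p => c p ω)) ε : ℕ) : ENNReal) ∂P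
      ≤ ∫⁻ ω, ((∑ t ∈ Finset.Icc 1 N, if X ω ≤ yt t then 1 else 0 : ℕ) : ENNReal) ∂P :=
        lintegral_mono_ae hae
  _ = ∫⁻ ω, ∑ t ∈ Finset.Icc 1 N, (if X ω ≤ yt t then (1:ENNReal) else 0) ∂P := by
      refine lintegral_congr fun ω => ?_
      push_cast
      rfl
  _ = ∑ t ∈ Finset.Icc 1 N, ∫⁻ ω, (if X ω ≤ yt t then (1:ENNReal) else 0) ∂P :=
      lintegral_finset_sum _ fun t _ =>
        Measurable.ite (hmeasX (yt t)) measurable_const measurable_const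
  _ = ∑ t ∈ Finset.Icc 1 N, P {ω | X ω ≤ yt t} := by
      refine Finset.sum_congr rfl fun t _ => ?_
      have heq : (fun ω => if X ω ≤ yt t then (1:ENNReal) else 0)
          = {ω | X ω ≤ yt t}.indicator (fun _ => (1:ENNReal)) := by
        funext ω; rw [Set.indicator_apply]; rfl
      rw [heq, lintegral_indicator_const (hmeasX (yt t)), one_mul]
  _ ≤ ∑ t ∈ Finset.Icc 1 N, ENNReal.ofReal (min 1 (B / (t:ℝ))) := by
      refine Finset.sum_le_sum fun t ht => ?_
      rw [Finset.mem_Icc] at ht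
      have htpos : (0:ℝ) < t := by exact_mod_cast ht.1
      have hyt0 : 0 ≤ yt t := by rw [hyt]; positivity
      have h1 : P {ω | X ω ≤ yt t} ≤ min 1 ((D:ENNReal) * ENNReal.ofReal (φ * yt t)) :=
        le_min prob_le_one (htail (yt t) hyt0)
      have h2 : (D:ENNReal) * ENNReal.ofReal (φ * yt t) = ENNReal.ofReal (B / (t:ℝ)) := by
        rw [← ENNReal.ofReal_natCast D, ← ENNReal.ofReal_mul (by positivity)]
        congr 1
        rw [hB, hyt, hA]
        field_simp
      rw [h2] at h1
      rw [← min_one_ofReal]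
      exact h1
  _ = ENNReal.ofReal (∑ t ∈ Finset.Icc 1 N, min 1 (B / (t:ℝ))) :=
      (ENNReal.ofReal_sum_of_nonneg fun t ht => le_min zero_le_one (by
        rw [Finset.mem_Icc] at ht
        have htpos : (0:ℝ) < t := by exact_mod_cast ht.1
        positivity)).symm
  _ ≤ ENNReal.ofReal
          (φ * (1 + 1 / ε) * (D:ℝ) ^ 2 * (n : ℝ) ^ (d + 1) *
              (m * Real.log (n + 1) + Real.log (D:ℝ)) + 1) := by
      apply ENNReal.ofReal_le_ofReal
      set LN : ℝ := m * Real.log ((n:ℝ) + 1) with hLN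
      set LD : ℝ := Real.log (D:ℝ) with hLD
      set C : ℝ := φ * (D:ℝ)^2 * (n:ℝ)^(d+1) * (LN + LD) with hC
      have hlogn1 : 0 ≤ Real.log ((n:ℝ) + 1) := Real.log_nonneg (by linarith)
      have hLN0 : 0 ≤ LN := by rw [hLN]; positivity
      have hLD2 : Real.log 2 ≤ LD := by
        rw [hLD]; exact Real.log_le_log (by norm_num) h2D
      have hLD0 : 0 ≤ LD := le_trans (Real.log_nonneg (by norm_num)) hLD2
      have hC0 : 0 ≤ C := by rw [hC]; positivity
      have hLNlog : Real.log (N:ℝ) ≤ LN := by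
        have hNpos : (0:ℝ) < (N:ℝ) := by exact_mod_cast hN1
        have hNle : (N:ℝ) ≤ ((n:ℝ)+1)^m := by
          have hNle' : (N:ℕ) ≤ (n+1)^m := by omega
          calc (N:ℝ) ≤ (((n+1)^m : ℕ):ℝ) := by exact_mod_cast hNle'
          _ = ((n:ℝ)+1)^m := by push_cast; ring
        calc Real.log (N:ℝ) ≤ Real.log (((n:ℝ)+1)^m) := Real.log_le_log hNpos hNle
        _ = m * Real.log ((n:ℝ)+1) := by rw [Real.log_pow]
        _ = LN := by rw [hLN]
      have hmain := sum_min_le N hN1 B LN LD C hB0 hLNlog hLN0 hLD2 hC0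
      refine hmain.trans (le_of_eq ?_)
      rw [hC, hB, hLN, hLD]
      field_simp
      ring
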